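/- The choice function C_Π^f defined from a Partition instance Π = (a_1,...,a_k) with s = (1/2)Σa_i — which accepts all upstream contracts and accepts the downstream contract y if and only if the offered upstream contracts X satisfy Σ{a_i : x_i ∈ X} ≥ s — satisfies the irrelevance of rejected contracts condition and is fully substitutable. -/

import Mathlib

open Finset

/-- A trading network: firms `F`, contracts `X`, seller/buyer maps, and choice functions. -/
structure TradingNetwork (F X : Type) where
  sell : X → F
  buy  : X → F
  C : F → Finset X → Finset X

namespace TradingNetwork

variable {F X : Type} [DecidableEq F] [DecidableEq X] [Fintype X]

/-- The contracts in `Y` involving firm `f`. -/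
def own (N : TradingNetwork F X) (f : F) (Y : Finset X) : Finset X :=
  Y.filter fun x => N.sell x = f ∨ N.buy x = f

/-- Upstream contracts of `f` (contracts where `f` is the buyer). -/
def XB (N : TradingNetwork F X) (f : F) : Finset X := univ.filter fun x => N.buy x = f

/-- Downstream contracts of `f` (contracts where `f` is the seller). -/
def XS (N : TradingNetwork F X) (f : F) : Finset X := univ.filter fun x => N.sell x = f

/-- A terminal agent: a terminal seller (no upstream contracts) or terminal buyer. -/
def Terminal (N : TradingNetwork F X) (f : F) : Prop := N.XB f = ∅ ∨ N.XS f = ∅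

/-- `S` consists of the `k` most preferred elements of `Y` according to the
rank function `r` (lower rank = more preferred). -/
def IsTop (r : X → ℕ) (k : ℕ) (Y S : Finset X) : Prop :=
  S ⊆ Y ∧ S.card = k ∧ ∀ x ∈ S, ∀ y ∈ Y, y ∉ S → r x < r y

/-- The choice functions of `N` are flow-based with respect to the preference ranks
`rkB` (over upstream contracts) and `rkS` (over downstream contracts): terminal agents
accept everything, and a non-terminal agent offered upstream contracts `Y ∩ XB f` and
downstream contracts `Y ∩ XS f` chooses its `k = min (|Y ∩ XB f|) (|Y ∩ XS f|)` most
preferred contracts on each side. -/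
structure FlowBased (N : TradingNetwork F X) (rkB rkS : F → X → ℕ) : Prop where
  injB : ∀ f, ∀ x ∈ N.XB f, ∀ y ∈ N.XB f, rkB f x = rkB f y → x = y
  injS : ∀ f, ∀ x ∈ N.XS f, ∀ y ∈ N.XS f, rkS f x = rkS f y → x = y
  C_own : ∀ f Y, N.C f Y ⊆ N.own f Y
  terminal_accepts : ∀ f, N.Terminal f → ∀ Y, N.C f Y = N.own f Y
  top_choice : ∀ f, ¬ N.Terminal f → ∀ Y : Finset X,
      IsTop (rkB f) (min (Y ∩ N.XB f).card (Y ∩ N.XS f).card)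
        (Y ∩ N.XB f) (N.C f Y ∩ N.XB f)
    ∧ IsTop (rkS f) (min (Y ∩ N.XB f).card (Y ∩ N.XS f).card)
        (Y ∩ N.XS f) (N.C f Y ∩ N.XS f)

/-- A flow network: a trading network with no self-loop contracts, flow-based choice
functions, and exactly two terminal agents. -/
instance (N : TradingNetwork F X) : DecidablePred N.Terminal := fun f =>
  decidable_of_iff (N.XB f = ∅ ∨ N.XS f = ∅) Iff.rfl

def IsFlowNetwork [Fintype F] (N : TradingNetwork F X) (rkB rkS : F → X → ℕ) : Prop :=
  (∀ x, N.sell x ≠ N.buy x) ∧ N.FlowBased rkB rkS ∧ Fintype.card {f // N.Terminal f} = 2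

/-- An outcome is acceptable (individually rational for every firm). -/
def Acceptable (N : TradingNetwork F X) (A : Finset X) : Prop :=
  ∀ f, N.C f (N.own f A) = N.own f A

/-- `B` is `(A,f)`-acceptable: `f` chooses all its contracts in `B` when offered `B` alongside `A`. -/
def AccAlongside (N : TradingNetwork F X) (A B : Finset X) (f : F) : Prop :=
  N.own f B ⊆ N.C f (N.own f A ∪ N.own f B)

/-- Firm `f` is involved in the contract set `B`. -/
def Involved (N : TradingNetwork F X) (B : Finset X) (f : F) : Prop := (N.own f B).Nonempty

/-- `Z` is a blocking set for the outcome `A`. -/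
def Blocks (N : TradingNetwork F X) (A Z : Finset X) : Prop :=
  Z.Nonempty ∧ Disjoint Z A ∧ ∀ f, N.Involved Z f → N.AccAlongside A Z f

/-- A stable outcome: acceptable and admitting no blocking set. -/
def Stable (N : TradingNetwork F X) (A : Finset X) : Prop :=
  N.Acceptable A ∧ ¬ ∃ Z, N.Blocks A Z

/-- A path: consecutive contracts, with all involved firms distinct. -/
def IsPath (N : TradingNetwork F X) (l : List X) : Prop :=
  ∃ h : l ≠ [], l.Chain' (fun x y => N.buy x = N.sell y) ∧
    (N.sell (l.head h) :: l.map N.buy).Nodup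

/-- A cycle: consecutive contracts with distinct sellers, returning to the start. -/
def IsCycle (N : TradingNetwork F X) (l : List X) : Prop :=
  ∃ h : l ≠ [], l.Chain' (fun x y => N.buy x = N.sell y) ∧
    (l.map N.sell).Nodup ∧ N.buy (l.getLast h) = N.sell (l.head h)

/-- `l` is a blocking path or blocking cycle for the outcome `A`. -/
def BlockingPathOrCycle (N : TradingNetwork F X) (A : Finset X) (l : List X) : Prop :=
  (N.IsPath l ∨ N.IsCycle l) ∧ Disjoint l.toFinset A ∧
    ∀ f, N.Involved l.toFinset f → N.AccAlongside A l.toFinset f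

/-- A path-or-cycle-stable outcome. -/
def PathOrCycleStable (N : TradingNetwork F X) (A : Finset X) : Prop :=
  N.Acceptable A ∧ ¬ ∃ l : List X, N.BlockingPathOrCycle A l

/-- Chosen upstream contracts of `f` when offered upstream contracts `Y` and downstream `Z`. -/
def CB (N : TradingNetwork F X) (f : F) (Y Z : Finset X) : Finset X :=
  N.C f ((Y ∩ N.XB f) ∪ (Z ∩ N.XS f)) ∩ N.XB f

/-- Chosen downstream contracts of `f` when offered downstream `Z` and upstream `Y`. -/
def CS (N : TradingNetwork F X) (f : F) (Z Y : Finset X) : Finset X :=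
  N.C f ((Y ∩ N.XB f) ∪ (Z ∩ N.XS f)) ∩ N.XS f

/-- Rejected upstream contracts. -/
def RB (N : TradingNetwork F X) (f : F) (Y Z : Finset X) : Finset X :=
  (Y ∩ N.XB f) \ N.CB f Y Z

/-- Rejected downstream contracts. -/
def RS (N : TradingNetwork F X) (f : F) (Z Y : Finset X) : Finset X :=
  (Z ∩ N.XS f) \ N.CS f Z Y

/-- Full substitutability (same-side substitutability and cross-side complementarity)
of the choice function of firm `f`. -/
def FullySubstitutableAt (N : TradingNetwork F X) (f : F) : Prop :=
  ∀ Y' Y Z' Z : Finset X, Y' ⊆ Y → Z' ⊆ Z →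
    N.RB f Y' Z ⊆ N.RB f Y Z ∧ N.RS f Z' Y ⊆ N.RS f Z Y ∧
    N.RB f Y Z ⊆ N.RB f Y Z' ∧ N.RS f Z Y ⊆ N.RS f Z Y'

/-- Full substitutability of all choice functions. -/
def FullySubstitutable (N : TradingNetwork F X) : Prop :=
  ∀ f, N.FullySubstitutableAt f

/-- The irrelevance of rejected contracts condition for the choice function of firm `f`. -/
def IRCAt (N : TradingNetwork F X) (f : F) : Prop :=
  ∀ Y Z : Finset X, N.C f Y ⊆ Z → Z ⊆ Y → N.C f Z = N.C f Y

/-- The irrelevance of rejected contracts condition. -/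
def IRC (N : TradingNetwork F X) : Prop := ∀ f, N.IRCAt f

end TradingNetwork

/-! ### The two-firm network built from a Partition-style instance -/

/-- Contracts of the two-firm network: `none` is the contract `y` (sold by firm `f` to
firm `g`), and `some i` is the contract `x_i` (sold by `g` to `f`). -/
abbrev PContract (k : ℕ) : Type := Option (Fin k)

/-- The two-firm trading network: firm `f` is `false`, firm `g` is `true`; their choice
functions are `Cf'` and `Cg'` respectively. -/
def pnet {k : ℕ} (Cf' Cg' : Finset (PContract k) → Finset (PContract k)) :
    TradingNetwork Bool (PContract k) :=
  ⟨fun x => x.isSome, fun x => !x.isSome, fun g W => if g then Cg' W else Cf' W⟩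

/-- The total `∑ i, a i  (= 2s)`. -/
def ptotal {k : ℕ} (a : Fin k → ℕ) : ℕ := ∑ i, a i

/-- The sum of the `a i` over the contracts `x_i` present in `W`. -/
def psum {k : ℕ} (a : Fin k → ℕ) (W : Finset (PContract k)) : ℕ :=
  ∑ i ∈ Finset.univ.filter (fun i => some i ∈ W), a i

/-- The choice function `C_Π^f`: accept all offered upstream contracts `x_i`, and accept
the downstream contract `y` iff the offered `x_i` satisfy `∑ a_i ≥ s`. -/
def CPartF {k : ℕ} (a : Fin k → ℕ) (W : Finset (PContract k)) : Finset (PContract k) :=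
  if ptotal a ≤ 2 * psum a W then W else W.erase none

/-- The choice function `C_Π^g`: if `y` is not offered, reject everything; if `y` is
offered, accept `y` together with those offered `x_i` whose prefix sum `∑ {a_j : x_j`
offered, `j ≤ i}` is at most `s`. -/
def CPartG {k : ℕ} (a : Fin k → ℕ) (W : Finset (PContract k)) : Finset (PContract k) :=
  if none ∈ W then
    insert none (W.filter fun x => ∃ i : Fin k, x = some i ∧
      2 * (∑ j ∈ Finset.univ.filter (fun j => some j ∈ W ∧ j ≤ i), a j) ≤ ptotal a)
  else ∅

/-! `C_Π^f` accepts every offered upstream contract, and its decision on `y` depends only on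
the offered upstream contracts, through the monotone quantity `∑ {a_i : x_i ∈ X}`. So no
upstream contract is ever rejected, `y` is rejected exactly when it is offered and that sum
is below `s`, and the conditions on rejected sets reduce to monotonicity of the sum. For IRC,
any `Z` between `C_Π^f(W)` and `W` contains the same upstream contracts as `W`, hence leads
to the same decision. -/

section PContract

variable {k : ℕ} (a : Fin k → ℕ)

lemma psum_mono {W W' : Finset (PContract k)} (h : W ⊆ W') : psum a W ≤ psum a W' :=
  Finset.sum_le_sum_of_subset fun _ hi => by
    simp only [Finset.mem_filter, Finset.mem_univ, true_and] at hi ⊢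
    exact h hi

lemma psum_congr {W W' : Finset (PContract k)} (h : ∀ i : Fin k, some i ∈ W ↔ some i ∈ W') :
    psum a W = psum a W' := by
  unfold psum
  congr 1
  exact Finset.filter_congr fun i _ => h i

lemma erase_none_subset_CPartF (W : Finset (PContract k)) : W.erase none ⊆ CPartF a W := by
  unfold CPartF
  split
  · exact Finset.erase_subset none W
  · exact Finset.Subset.refl _

lemma some_mem_CPartF {W : Finset (PContract k)} {i : Fin k} (h : some i ∈ W) :
    some i ∈ CPartF a W :=
  erase_none_subset_CPartF a W (Finset.mem_erase.2 ⟨Option.some_ne_none i, h⟩)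

lemma none_mem_CPartF {W : Finset (PContract k)} :
    none ∈ CPartF a W ↔ none ∈ W ∧ ptotal a ≤ 2 * psum a W := by
  unfold CPartF
  split <;> simp [*]

lemma CPartF_eq_of_subset {W Z : Finset (PContract k)} (hCZ : CPartF a W ⊆ Z) (hZW : Z ⊆ W) :
    CPartF a Z = CPartF a W := by
  have hWZ : W.erase none ⊆ Z := (erase_none_subset_CPartF a W).trans hCZ
  have hsum : psum a Z = psum a W := psum_congr a fun i =>
    ⟨fun hi => hZW hi, fun hi => hWZ (Finset.mem_erase.2 ⟨Option.some_ne_none i, hi⟩)⟩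
  by_cases h : ptotal a ≤ 2 * psum a W
  · have hCW : CPartF a W = W := if_pos h
    rw [Finset.Subset.antisymm hZW (hCW ▸ hCZ)]
  · have hCW : CPartF a W = W.erase none := if_neg h
    have hCZ' : CPartF a Z = Z.erase none := if_neg (hsum ▸ h)
    rw [hCW, hCZ']
    exact Finset.Subset.antisymm (Finset.erase_subset_erase none hZW)
      fun x hx => Finset.mem_erase.2 ⟨Finset.ne_of_mem_erase hx, hWZ hx⟩

end PContract

section pnet

variable {k : ℕ} {Cf Cg : Finset (PContract k) → Finset (PContract k)}

lemma pnet_mem_XB_false {x : PContract k} : x ∈ (pnet Cf Cg).XB false ↔ x ≠ none := by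
  simp [pnet, TradingNetwork.XB, Option.isSome_iff_ne_none]

lemma pnet_mem_XS_false {x : PContract k} : x ∈ (pnet Cf Cg).XS false ↔ x = none := by
  cases x <;> simp [pnet, TradingNetwork.XS]

lemma pnet_RB_false_eq_empty (hCf : ∀ W (i : Fin k), some i ∈ W → some i ∈ Cf W)
    (Y Z : Finset (PContract k)) : (pnet Cf Cg).RB false Y Z = ∅ := by
  refine Finset.eq_empty_of_forall_notMem fun x hx => ?_
  obtain ⟨hxY, hxB⟩ := Finset.mem_inter.1 (Finset.mem_sdiff.1 hx).1
  obtain ⟨i, rfl⟩ := Option.ne_none_iff_exists'.1 (pnet_mem_XB_false.1 hxB)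
  refine (Finset.mem_sdiff.1 hx).2 (Finset.mem_inter.2 ⟨hCf _ i ?_, hxB⟩)
  exact Finset.mem_union_left _ (Finset.mem_inter.2 ⟨hxY, hxB⟩)

lemma pnet_mem_RS_false {Y Z : Finset (PContract k)} {x : PContract k} :
    x ∈ (pnet Cf Cg).RS false Z Y ↔ x = none ∧ none ∈ Z ∧
      none ∉ Cf ((Y ∩ (pnet Cf Cg).XB false) ∪ (Z ∩ (pnet Cf Cg).XS false)) := by
  simp only [TradingNetwork.RS, TradingNetwork.CS, Finset.mem_sdiff, Finset.mem_inter,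
    pnet_mem_XS_false]
  constructor
  · rintro ⟨⟨hxZ, rfl⟩, hxC⟩
    exact ⟨rfl, hxZ, fun h => hxC ⟨h, rfl⟩⟩
  · rintro ⟨rfl, hZ, hC⟩
    exact ⟨⟨hZ, rfl⟩, fun h => hC h.1⟩

end pnet

section CPartF_pnet

variable {k : ℕ} (a : Fin k → ℕ) {Cg : Finset (PContract k) → Finset (PContract k)}

lemma psum_pnet_offer (Y Z : Finset (PContract k)) :
    psum a ((Y ∩ (pnet (CPartF a) Cg).XB false) ∪ (Z ∩ (pnet (CPartF a) Cg).XS false)) =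
      psum a Y :=
  psum_congr a fun i => by simp [pnet_mem_XB_false, pnet_mem_XS_false]

lemma CPartF_mem_RS_false {Y Z : Finset (PContract k)} {x : PContract k} :
    x ∈ (pnet (CPartF a) Cg).RS false Z Y ↔
      x = none ∧ none ∈ Z ∧ 2 * psum a Y < ptotal a := by
  rw [pnet_mem_RS_false, none_mem_CPartF, psum_pnet_offer]
  simp +contextual [pnet_mem_XS_false]

end CPartF_pnet

theorem CPartF_IRC_and_fullySubstitutable_general {k : ℕ} (a : Fin k → ℕ) :
    (pnet (CPartF a) (CPartG a)).IRCAt false ∧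
    (pnet (CPartF a) (CPartG a)).FullySubstitutableAt false := by
  refine ⟨fun W Z hCZ hZW => CPartF_eq_of_subset a hCZ hZW, ?_⟩
  intro Y' Y Z' Z hY hZ
  have hRB := pnet_RB_false_eq_empty (Cg := CPartG a) fun W i => some_mem_CPartF a
  refine ⟨by simp [hRB], fun x hx => ?_, by simp [hRB], fun x hx => ?_⟩
  · obtain ⟨rfl, hZ', hlt⟩ := (CPartF_mem_RS_false a).1 hx
    exact (CPartF_mem_RS_false a).2 ⟨rfl, hZ hZ', hlt⟩
  · obtain ⟨rfl, hZ', hlt⟩ := (CPartF_mem_RS_false a).1 hx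
    exact (CPartF_mem_RS_false a).2
      ⟨rfl, hZ', (Nat.mul_le_mul_left 2 (psum_mono a hY)).trans_lt hlt⟩

/-- The choice function `C_Π^f` built from a Partition instance
`a_1 ≤ … ≤ a_k` of positive integers satisfies the irrelevance of rejected contracts
condition and is fully substitutable. -/
theorem CPartF_IRC_and_fullySubstitutable {k : ℕ} (a : Fin k → ℕ)
    (hpos : ∀ i, 0 < a i) (hmono : ∀ i j : Fin k, i ≤ j → a i ≤ a j) :
    (pnet (CPartF a) (CPartG a)).IRCAt false ∧
    (pnet (CPartF a) (CPartG a)).FullySubstitutableAt false :=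
  CPartF_IRC_and_fullySubstitutable_general a
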